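/- arXiv:1004.3517 — 2 statements merged into one kernel-verified Lean document; each statement's English description precedes it below -/
import Mathlib

section
/- Let 0 < p < a < 1 and let n be a positive integer. If B₁, …, B_n are independent Bernoulli random variables with bias p and S_n = ∑_{j=1}^n B_j, then P(S_n ≥ n·a) ≤ 2^{−n·H(a,p)}. -/
open MeasureTheory ProbabilityTheory

/-- The relative entropy `H(a,p) = a·log₂(a/p) + (1−a)·log₂((1−a)/(1−p))` between
Bernoulli distributions with biases `a` and `p`. -/
noncomputable def relEntropy (a p : ℝ) : ℝ :=
  a * Real.logb 2 (a / p) + (1 - a) * Real.logb 2 ((1 - a) / (1 - p))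

theorem stmt2 {Ω : Type*} [MeasurableSpace Ω] (P : Measure Ω) [IsProbabilityMeasure P]
    (p a : ℝ) (hp : 0 < p) (hpa : p < a) (ha : a < 1)
    (n : ℕ) (hn : 0 < n) (B : Fin n → Ω → ℝ)
    (hmeas : ∀ j, Measurable (B j))
    (hval : ∀ j ω, B j ω = 0 ∨ B j ω = 1)
    (hbias : ∀ j, P {ω | B j ω = 1} = ENNReal.ofReal p)
    (hindep : iIndepFun B P) :
    P {ω | (n : ℝ) * a ≤ ∑ j, B j ω} ≤
      ENNReal.ofReal ((2 : ℝ) ^ (-(n : ℝ) * relEntropy a p)) := by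
  have ha0 : 0 < a := hp.trans hpa
  have hp1 : p < 1 := hpa.trans ha
  have h1a : 0 < 1 - a := by linarith
  have h1p : 0 < 1 - p := by linarith
  set r : ℝ := a * (1 - p) / (p * (1 - a)) with hr
  have hrpos : 0 < r := by positivity
  have hr1 : 1 < r := by
    rw [hr, lt_div_iff₀ (by positivity)]
    nlinarith
  set t : ℝ := Real.log r with ht
  have htpos : 0 < t := Real.log_pos hr1
  have hexpt : Real.exp t = r := Real.exp_log hrpos
  -- each exp(t * B j ·) rewrites as affine function of B j
  have hrw : ∀ j, (fun ω => Real.exp (t * B j ω)) =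
      fun ω => 1 + (Real.exp t - 1) * Set.indicator {ω | B j ω = 1} (fun _ => (1:ℝ)) ω := by
    intro j
    funext ω
    rcases hval j ω with h | h
    · have : ω ∉ {ω | B j ω = 1} := by simp [Set.mem_setOf_eq, h]
      simp [h, Set.indicator_of_notMem this]
    · have : ω ∈ {ω | B j ω = 1} := h
      simp [h, Set.indicator_of_mem this]
  have hset : ∀ j, MeasurableSet {ω | B j ω = 1} := fun j =>
    (hmeas j) (measurableSet_singleton 1)
  have hint : ∀ j, Integrable (fun ω => Real.exp (t * B j ω)) P := by
    intro j
    rw [hrw j]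
    exact (integrable_const 1).add
      (((integrable_const (1:ℝ)).indicator (hset j)).const_mul _)
  have hmgf : ∀ j, mgf (B j) P t = 1 - p + p * Real.exp t := by
    intro j
    rw [mgf, hrw j]
    rw [integral_add (integrable_const 1)
      (((integrable_const (1:ℝ)).indicator (hset j)).const_mul _),
      integral_const, integral_const_mul, integral_indicator_const _ (hset j), measureReal_def, measureReal_def, hbias j]
    simp [ENNReal.toReal_ofReal hp.le]
    ring
  have hintS : Integrable (fun ω => Real.exp (t * (∑ j, B j) ω)) P :=
    hindep.integrable_exp_mul_sum hmeas (fun i _ => hint i)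
  have hchern := measure_ge_le_exp_mul_mgf ((n:ℝ) * a) htpos.le
      (X := ∑ j, B j) hintS
  have hsum_eq : {ω | (n : ℝ) * a ≤ ∑ j, B j ω} = {ω | (n : ℝ) * a ≤ (∑ j, B j) ω} := by
    simp [Finset.sum_apply]
  rw [hsum_eq]
  have hmgfS : mgf (∑ j, B j) P t = (1 - p + p * Real.exp t) ^ n := by
    rw [hindep.mgf_sum hmeas]
    simp [hmgf]
  -- the key real-number computation
  have hbase : 1 - p + p * Real.exp t = (1 - p) / (1 - a) := by
    rw [hexpt, hr]
    field_simp
    ring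
  have hkey : Real.exp (-t * ((n:ℝ) * a)) * (1 - p + p * Real.exp t) ^ n
      = (2 : ℝ) ^ (-(n : ℝ) * relEntropy a p) := by
    rw [hbase, ht, hr]
    have h2 : (2:ℝ) ^ (-(n : ℝ) * relEntropy a p)
        = Real.exp ((-(n : ℝ) * relEntropy a p) * Real.log 2) := by
      rw [Real.rpow_def_of_pos two_pos, mul_comm]
    rw [h2]
    have h3 : ((1 - p) / (1 - a)) ^ n = Real.exp ((n:ℝ) * Real.log ((1-p)/(1-a))) := by
      rw [Real.exp_nat_mul, Real.exp_log (by positivity)]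
    rw [h3, ← Real.exp_add]
    congr 1
    have e1 : Real.log (a * (1 - p) / (p * (1 - a)))
        = Real.log a + Real.log (1-p) - Real.log p - Real.log (1-a) := by
      rw [Real.log_div (by positivity) (by positivity), Real.log_mul (by positivity)
        (by positivity), Real.log_mul (by positivity) (by positivity)]
      ring
    have e2 : Real.log ((1-p)/(1-a)) = Real.log (1-p) - Real.log (1-a) :=
      Real.log_div (by positivity) (by positivity)
    have e3 : relEntropy a p * Real.log 2
        = a * (Real.log a - Real.log p)
          + (1 - a) * (Real.log (1-a) - Real.log (1-p)) := by
      rw [relEntropy]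
      rw [Real.logb, Real.logb, Real.log_div (by positivity) (by positivity),
        Real.log_div (by positivity) (by positivity)]
      field_simp
    rw [e1, e2]
    nlinarith [e3]
  rw [hmgfS, hkey] at hchern
  calc P {ω | (n : ℝ) * a ≤ (∑ j, B j) ω}
      = ENNReal.ofReal (P {ω | (n : ℝ) * a ≤ (∑ j, B j) ω}).toReal := by
        rw [ENNReal.ofReal_toReal (measure_ne_top _ _)]
    _ ≤ ENNReal.ofReal ((2 : ℝ) ^ (-(n : ℝ) * relEntropy a p)) :=
        ENNReal.ofReal_le_ofReal hchern
end

section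
/- Let φ : ℝ → ℝ be a Schwartz function. Then there exists a constant C > 0 such that for every λ ≥ 1 and every n ∈ ℤ, |(1/λ)·∑_{j∈ℤ} φ((j − n)/λ) − ∫_ℝ φ(t) dt| ≤ C/λ. -/
open MeasureTheory Filter Asymptotics FourierTransform Real SchwartzMap

noncomputable def myOfRealS (φ : SchwartzMap ℝ ℝ) : SchwartzMap ℝ ℂ where
  toFun x := (φ x : ℂ)
  smooth' := Complex.ofRealCLM.contDiff.comp φ.smooth'
  decay' k n := by
    obtain ⟨C, hC⟩ := φ.decay' k n
    refine ⟨C, fun x => ?_⟩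
    have h : (fun x => ((φ x : ℝ) : ℂ)) = (RCLike.ofRealLI : ℝ →ₗᵢ[ℝ] ℂ) ∘ ⇑φ := rfl
    have e := (RCLike.ofRealLI : ℝ →ₗᵢ[ℝ] ℂ).norm_iteratedFDeriv_comp_left (f := ⇑φ)
      (φ.smooth'.contDiffAt (x := x)) (i := n) (by exact_mod_cast le_top)
    rw [h, e]
    exact hC x

@[simp] lemma myOfRealS_apply (φ : SchwartzMap ℝ ℝ) (x : ℝ) : myOfRealS φ x = (φ x : ℂ) := rfl

lemma myAuxSummable {F : Type*} [NormedAddCommGroup F] [NormedSpace ℝ F] [CompleteSpace F]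
    (ψ : SchwartzMap ℝ F) {c : ℝ} (hc : c ≠ 0) :
    Summable fun k : ℤ => ψ (c * k) := by
  apply summable_of_isBigO ((Real.summable_abs_int_rpow one_lt_two).mul_left (|c| ^ (-2 : ℝ)))
  have h1 : Filter.Tendsto (fun k : ℤ => c * (k : ℝ)) Filter.cofinite (Filter.cocompact ℝ) := by
    have h2 := (Homeomorph.mulLeft₀ c hc).map_cocompact
    rw [← h2]
    exact Filter.Tendsto.comp Filter.tendsto_map Int.tendsto_coe_cofinite
  have h3 := (ψ.isBigO_cocompact_rpow (-2)).comp_tendsto h1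
  refine h3.trans (Asymptotics.isBigO_of_le _ fun k => ?_)
  simp only [Function.comp_apply, Real.norm_eq_abs]
  rw [abs_mul, Real.mul_rpow (abs_nonneg _) (abs_nonneg _)]

open RealInnerProductSpace in
lemma myFourierScale (f : ℝ → ℂ) {lam : ℝ} (hlam : lam ≠ 0) (ξ : ℝ) :
    𝓕 (fun x : ℝ => f (x * lam⁻¹)) ξ = |lam| • 𝓕 f (lam * ξ) := by
  rw [Real.fourier_eq, Real.fourier_eq,
    ← MeasureTheory.Measure.integral_comp_inv_mul_left (fun t : ℝ => 𝐞 (-⟪t, lam * ξ⟫) • f t) lam]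
  congr 1
  ext x
  have h1 : ⟪lam⁻¹ * x, lam * ξ⟫ = ⟪x, ξ⟫ := by
    simp only [RCLike.inner_apply, starRingEnd_apply, star_trivial]
    field_simp
  simp only [h1]
  congr 1
  rw [mul_comm]

theorem stmt7 (φ : SchwartzMap ℝ ℝ) :
    ∃ C > 0, ∀ lam : ℝ, 1 ≤ lam → ∀ n : ℤ,
      Summable (fun j : ℤ => φ (((j : ℝ) - (n : ℝ)) / lam)) ∧
      |(1 / lam) * ∑' j : ℤ, φ (((j : ℝ) - (n : ℝ)) / lam) - ∫ t : ℝ, φ t| ≤ C / lam := by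
  set φc := myOfRealS φ with hφc
  set ψ := SchwartzMap.fourierTransformCLM ℝ φc with hψdef
  obtain ⟨C₀, hC₀⟩ := ψ.decay' 2 0
  simp only [norm_iteratedFDeriv_zero] at hC₀
  replace hC₀ : ∀ x : ℝ, ‖x‖ ^ 2 * ‖ψ x‖ ≤ C₀ := hC₀
  have hC₀0 : 0 ≤ C₀ := le_trans (by positivity) (hC₀ 0)
  set K := ∑' k : ℤ, |(k : ℝ)| ^ (-2 : ℝ) with hKdef
  have hKsum : Summable fun k : ℤ => |(k : ℝ)| ^ (-2 : ℝ) :=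
    Real.summable_abs_int_rpow one_lt_two
  have hK0 : 0 ≤ K := tsum_nonneg fun k => Real.rpow_nonneg (abs_nonneg _) _
  refine ⟨C₀ * K + 1, by positivity, fun lam hlam n => ?_⟩
  have hlam0 : (0 : ℝ) < lam := lt_of_lt_of_le one_pos hlam
  have hlamne : lam ≠ 0 := hlam0.ne'
  -- real summability
  have hs1 : Summable fun j : ℤ => φ (lam⁻¹ * (j : ℝ)) := myAuxSummable φ (inv_ne_zero hlamne)
  have hsummR : Summable fun j : ℤ => φ (((j : ℝ) - (n : ℝ)) / lam) := by
    have h := ((Equiv.subRight n).summable_iff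
      (f := fun j : ℤ => φ (lam⁻¹ * (j : ℝ)))).mpr hs1
    refine h.congr fun j => ?_
    show φ (lam⁻¹ * (((j - n : ℤ) : ℤ) : ℝ)) = φ (((j : ℝ) - (n : ℝ)) / lam)
    congr 1
    push_cast
    ring
  refine ⟨hsummR, ?_⟩
  -- the scaled Schwartz function
  set u : ℝˣ := (Units.mk0 lam hlamne)⁻¹ with hu
  set glam : SchwartzMap ℝ ℂ :=
    SchwartzMap.compCLMOfContinuousLinearEquiv ℝ (ContinuousLinearEquiv.unitsEquivAut ℝ u) φc
    with hglam
  have hg : ∀ x : ℝ, glam x = φc (x * lam⁻¹) := fun x => by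
    rw [hglam]
    rw [SchwartzMap.compCLMOfContinuousLinearEquiv_apply]
    show φc (ContinuousLinearEquiv.unitsEquivAut ℝ u x) = _
    rw [ContinuousLinearEquiv.unitsEquivAut_apply]
    congr 1
  -- Poisson summation
  have hP := SchwartzMap.tsum_eq_tsum_fourier glam 0
  simp only [zero_add, QuotientAddGroup.mk_zero, fourier_eval_zero, mul_one] at hP
  -- Fourier transform of glam
  have h𝓕 : ∀ k : ℝ, SchwartzMap.fourierTransformCLM ℝ glam k = (lam : ℂ) * ψ (lam * k) := by
    intro k
    have hfun : ⇑glam = fun x : ℝ => φc (x * lam⁻¹) := funext hg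
    calc SchwartzMap.fourierTransformCLM ℝ glam k = 𝓕 (⇑glam) k := by
          rw [SchwartzMap.fourierTransformCLM_apply, SchwartzMap.fourier_coe]
      _ = 𝓕 (fun x : ℝ => φc (x * lam⁻¹)) k := by rw [hfun]
      _ = |lam| • 𝓕 (⇑φc) (lam * k) := myFourierScale (⇑φc) hlamne k
      _ = (lam : ℂ) * ψ (lam * k) := by
          rw [abs_of_pos hlam0, Complex.real_smul]
          try rfl
  -- summability of the Fourier side
  have hsψ : Summable fun k : ℤ => ψ (lam * (k : ℝ)) := myAuxSummable ψ hlamne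
  -- value at zero
  have hψ0 : ψ 0 = ((∫ t : ℝ, φ t : ℝ) : ℂ) := by
    rw [hψdef, SchwartzMap.fourierTransformCLM_apply, SchwartzMap.fourier_coe, Real.fourier_eq]
    simp only [inner_zero_right, neg_zero, AddChar.map_zero_eq_one, one_smul]
    exact integral_ofReal
  -- error term
  set E : ℂ := ∑' k : ℤ, if k = 0 then 0 else ψ (lam * (k : ℝ)) with hE
  have hEbound : ‖E‖ ≤ C₀ / lam ^ 2 * K := by
    rw [hE]
    apply tsum_of_norm_bounded ((hKsum.hasSum).mul_left (C₀ / lam ^ 2))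
    intro k
    by_cases hk : k = 0
    · rw [if_pos hk, norm_zero]
      exact mul_nonneg (by positivity) (Real.rpow_nonneg (abs_nonneg _) _)
    · rw [if_neg hk]
      have hk0 : ((k : ℝ)) ≠ 0 := Int.cast_ne_zero.mpr hk
      have hpos : (0 : ℝ) < (lam * (k : ℝ)) ^ 2 := by positivity
      have h3 : ‖ψ (lam * (k : ℝ))‖ ≤ C₀ / (lam * (k : ℝ)) ^ 2 := by
        rw [le_div_iff₀ hpos]
        have h4 := hC₀ (lam * (k : ℝ))
        rw [Real.norm_eq_abs, sq_abs] at h4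
        linarith [h4]

      refine h3.trans (le_of_eq ?_)
      rw [show (-2 : ℝ) = -((2 : ℕ) : ℝ) by norm_num, Real.rpow_neg (abs_nonneg _),
        Real.rpow_natCast, sq_abs, mul_pow, ← div_div, div_eq_mul_inv (C₀ / lam ^ 2)]
  -- complex identity
  have hTc : ((∑' j : ℤ, φ (((j : ℝ) - (n : ℝ)) / lam) : ℝ) : ℂ)
      = (lam : ℂ) * (((∫ t : ℝ, φ t : ℝ) : ℂ) + E) := by
    rw [Complex.ofReal_tsum]
    have step1 : (∑' j : ℤ, ((φ (((j : ℝ) - (n : ℝ)) / lam) : ℝ) : ℂ))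
        = ∑' j : ℤ, φc (lam⁻¹ * (j : ℝ)) := by
      have h := (Equiv.subRight n).tsum_eq (f := fun j : ℤ => φc (lam⁻¹ * (j : ℝ)))
      rw [← h]
      apply tsum_congr
      intro j
      show ((φ (((j : ℝ) - (n : ℝ)) / lam) : ℝ) : ℂ) = φc (lam⁻¹ * (((j - n : ℤ) : ℤ) : ℝ))
      have harg : lam⁻¹ * (((j - n : ℤ) : ℤ) : ℝ) = ((j : ℝ) - (n : ℝ)) / lam := by
        push_cast
        ring
      rw [harg, hφc, myOfRealS_apply]
    rw [step1]
    have step2 : (∑' j : ℤ, φc (lam⁻¹ * (j : ℝ))) = ∑' j : ℤ, glam ((j : ℤ) : ℝ) := by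
      apply tsum_congr
      intro j
      rw [hg]
      congr 1
      ring
    rw [step2, hP]
    have step3 : (∑' k : ℤ, SchwartzMap.fourierTransformCLM ℝ glam (k : ℝ))
        = (lam : ℂ) * ∑' k : ℤ, ψ (lam * (k : ℝ)) := by
      rw [← tsum_mul_left]
      exact tsum_congr fun k => h𝓕 k
    rw [show (∑' k : ℤ, 𝓕 glam (k : ℝ)) = _ from step3]
    congr 1
    rw [hsψ.tsum_eq_add_tsum_ite 0]
    congr 1
    · rw [← hψ0]
      congr 1
      push_cast
      ring
  -- final estimate
  have hkey : |(1 / lam) * ∑' j : ℤ, φ (((j : ℝ) - (n : ℝ)) / lam) - ∫ t : ℝ, φ t| = ‖E‖ := by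
    rw [← Real.norm_eq_abs, ← Complex.norm_real, Complex.ofReal_sub, Complex.ofReal_mul,
      hTc]
    congr 1
    rw [Complex.ofReal_div]
    have hlamC : ((lam : ℝ) : ℂ) ≠ 0 := Complex.ofReal_ne_zero.mpr hlamne
    field_simp
    push_cast
    ring
  rw [hkey]
  refine hEbound.trans ?_
  rw [div_mul_eq_mul_div, div_le_div_iff₀ (by positivity) hlam0]
  have hll : lam ≤ lam ^ 2 := by nlinarith
  have h6 : C₀ * K * lam ≤ C₀ * K * lam ^ 2 :=
    mul_le_mul_of_nonneg_left hll (mul_nonneg hC₀0 hK0)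
  nlinarith [sq_nonneg lam]
end
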